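/- arXiv:0706.1415 — 9 statements merged into one kernel-verified Lean document; each statement's English description precedes it below -/
import Mathlib

section
/- Let E¹ and E² be two-outcome POMs (simple observables) on a Hilbert space, given by effects E¹₊, E¹₋ = I − E¹₊ and E²₊, E²₋ = I − E²₊. Then E¹ and E² are jointly measurable (i.e., there exist effects G₊₊, G₊₋, G₋₊, G₋₋ summing to I with G₊₊ + G₊₋ = E¹₊ and G₊₊ + G₋₊ = E²₊) if and only if there exists an operator G with 0 ≤ G, G ≤ E¹₊, G ≤ E²₊, and E¹₊ + E²₊ − I ≤ G. -/
noncomputable section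

variable {H : Type*} [NormedAddCommGroup H] [InnerProductSpace ℂ H] [CompleteSpace H]

def opLE (A B : H →L[ℂ] H) : Prop := (B - A).IsPositive

def IsEffect (A : H →L[ℂ] H) : Prop := opLE 0 A ∧ opLE A 1

def IsJointObs (E1 E2 Gpp Gpm Gmp Gmm : H →L[ℂ] H) : Prop :=
  IsEffect Gpp ∧ IsEffect Gpm ∧ IsEffect Gmp ∧ IsEffect Gmm ∧
  Gpp + Gpm + Gmp + Gmm = 1 ∧ Gpp + Gpm = E1 ∧ Gpp + Gmp = E2

def JM (E1 E2 : H →L[ℂ] H) : Prop :=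
  ∃ Gpp Gpm Gmp Gmm, IsJointObs E1 E2 Gpp Gpm Gmp Gmm

lemma opLE_of_eq {T C D : H →L[ℂ] H} (h : T.IsPositive) (hEq : D - C = T) :
    opLE C D := by unfold opLE; rwa [hEq]

set_option maxHeartbeats 1000000 in
theorem stmt3 (E1 E2 : H →L[ℂ] H) (h1 : IsEffect E1) (h2 : IsEffect E2) :
    JM E1 E2 ↔
    ∃ G : H →L[ℂ] H, opLE 0 G ∧ opLE G E1 ∧ opLE G E2 ∧ opLE (E1 + E2 - 1) G := by
  constructor
  · rintro ⟨Gpp, Gpm, Gmp, Gmm, hpp, hpm, hmp, hmm, hsum, hE1, hE2⟩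
    refine ⟨Gpp, hpp.1, ?_, ?_, ?_⟩
    · exact opLE_of_eq hpm.1 (by rw [← hE1]; abel)
    · exact opLE_of_eq hmp.1 (by rw [← hE2]; abel)
    · exact opLE_of_eq hmm.1 (by rw [← hE1, ← hE2, ← hsum]; abel)
  · rintro ⟨G, hG0, hGE1, hGE2, hlow⟩
    have hG0' : G.IsPositive := by simpa [opLE] using hG0
    have hE1G : (E1 - G).IsPositive := hGE1
    have hE2G : (E2 - G).IsPositive := hGE2
    have h1E1 : ((1 : H →L[ℂ] H) - E1).IsPositive := h1.2
    have hE2pos : E2.IsPositive := by simpa [opLE] using h2.1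
    have h1E2 : ((1 : H →L[ℂ] H) - E2).IsPositive := h2.2
    refine ⟨G, E1 - G, E2 - G, 1 - E1 - E2 + G, ?_, ?_, ?_, ?_, by abel, by abel, by abel⟩
    · exact ⟨hG0, opLE_of_eq (h1E1.add hE1G) (by abel)⟩
    · refine ⟨opLE_of_eq hGE1 (by abel), opLE_of_eq (h1E1.add hG0') (by abel)⟩
    · refine ⟨opLE_of_eq hGE2 (by abel), opLE_of_eq (h1E2.add hG0') (by abel)⟩
    · refine ⟨opLE_of_eq hlow (by abel), opLE_of_eq (hE1G.add hE2pos) (by abel)⟩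
end
end

section
/- Let E¹ and E² be jointly measurable simple observables on a Hilbert space, and suppose E¹ is sharp (i.e., E¹₊ is a projection). Then E¹₊ commutes with E²₊, and any joint observable G of E¹ and E² satisfies Gᵢⱼ = E¹ᵢ E²ⱼ for all i,j ∈ {+,−}. -/
noncomputable section

variable {H : Type*} [NormedAddCommGroup H] [InnerProductSpace ℂ H] [CompleteSpace H]

local notation "⟪" x ", " y "⟫" => @inner ℂ _ _ x y

lemma pos_apply_eq_zero (F : H →L[ℂ] H) (hF : F.IsPositive) (y : H)
    (hy : RCLike.re ⟪F y, y⟫ = 0) : F y = 0 := by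
  have hsymm : ∀ a b : H, ⟪F a, b⟫ = ⟪a, F b⟫ :=
    (ContinuousLinearMap.isSelfAdjoint_iff_isSymmetric.mp hF.isSelfAdjoint)
  have key : ∀ z : H, RCLike.re ⟪F y, z⟫ = 0 := by
    intro z
    set r : ℝ := RCLike.re ⟪F y, z⟫ with hr
    set c : ℝ := RCLike.re ⟪F z, z⟫ with hc
    have hc0 : 0 ≤ c := hF.2 z
    have hzy : ⟪F z, y⟫ = starRingEnd ℂ ⟪F y, z⟫ := by
      rw [hsymm z y, ← inner_conj_symm]
    have hq : ∀ t : ℝ, 0 ≤ t ^ 2 * c + 2 * t * r := by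
      intro t
      have h0 := hF.2 (y + (t : ℂ) • z)
      rw [ContinuousLinearMap.reApplyInnerSelf] at h0
      have hexp : RCLike.re ⟪F (y + (t:ℂ) • z), y + (t:ℂ) • z⟫
          = RCLike.re ⟪F y, y⟫ + (t ^ 2 * c + 2 * t * r) := by
        simp only [map_add, ContinuousLinearMap.map_smul, inner_add_left, inner_add_right,
          inner_smul_left, inner_smul_right, Complex.conj_ofReal, hzy]
        have hre : ∀ w : ℂ, RCLike.re w = w.re := fun _ => rfl
        simp only [hre, Complex.add_re, Complex.re_ofReal_mul, Complex.conj_re]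
        rw [hr, hc]
        simp only [hre]
        ring
      rw [hexp, hy, zero_add] at h0
      exact h0
    have h2 : 0 ≤ r ^ 2 * c - 2 * r ^ 2 * (c + 1) := by
      have h := hq (-r / (c + 1))
      have hc1 : (0:ℝ) < c + 1 := by linarith
      have e : (-r/(c+1)) ^ 2 * c + 2 * (-r/(c+1)) * r
          = (r ^ 2 * c - 2 * r ^ 2 * (c+1)) / ((c+1) ^ 2) := by
        field_simp
        ring
      rw [e] at h
      have := (le_div_iff₀ (by positivity : (0:ℝ) < (c+1) ^ 2)).mp h
      linarith [this]
    have hr2 : r ^ 2 = 0 := by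
      nlinarith [sq_nonneg r, mul_nonneg (sq_nonneg r) hc0]
    exact pow_eq_zero_iff two_ne_zero |>.mp hr2
  have hz : ⟪F y, F y⟫ = 0 := by
    have h1 : (⟪F y, F y⟫ : ℂ).re = 0 := key (F y)
    have h2 := key ((Complex.I) • (F y))
    rw [inner_smul_right] at h2
    have h2' : (Complex.I * ⟪F y, F y⟫).re = 0 := h2
    rw [Complex.mul_re, Complex.I_re, Complex.I_im] at h2'
    apply Complex.ext
    · simpa using h1
    · simp only [Complex.zero_im]
      linarith [h2']
  exact inner_self_eq_zero.mp hz

lemma proj_absorb (P F : H →L[ℂ] H) (hP : P * P = P) (hPsa : IsSelfAdjoint P)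
    (hF : F.IsPositive) (hle : (P - F).IsPositive) : F * P = F ∧ P * F = F := by
  have hkill : ∀ x : H, F (x - P x) = 0 := by
    intro x
    set y := x - P x with hy
    have hPy : P y = 0 := by
      have := congrArg (fun T => T x) hP
      simp only [ContinuousLinearMap.mul_apply] at this
      simp [hy, map_sub, this]
    apply pos_apply_eq_zero F hF
    have h1 : 0 ≤ RCLike.re ⟪F y, y⟫ := hF.2 y
    have h2 : 0 ≤ RCLike.re ⟪(P - F) y, y⟫ := hle.2 y
    simp only [ContinuousLinearMap.sub_apply, hPy, zero_sub, inner_neg_left, map_neg] at h2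
    linarith
  have hFP : F * P = F := by
    ext x
    simp only [ContinuousLinearMap.mul_apply]
    have h := hkill x
    rw [map_sub, sub_eq_zero] at h
    exact h.symm
  refine ⟨hFP, ?_⟩
  have := congrArg star hFP
  rwa [star_mul, hPsa.star_eq, hF.isSelfAdjoint.star_eq] at this

theorem stmt4 (E1 E2 : H →L[ℂ] H) (h1 : IsEffect E1) (h2 : IsEffect E2)
    (hproj : E1 * E1 = E1) (Gpp Gpm Gmp Gmm : H →L[ℂ] H)
    (hG : IsJointObs E1 E2 Gpp Gpm Gmp Gmm) :
    E1 * E2 = E2 * E1 ∧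
    Gpp = E1 * E2 ∧ Gpm = E1 * (1 - E2) ∧ Gmp = (1 - E1) * E2 ∧
    Gmm = (1 - E1) * (1 - E2) := by
  obtain ⟨hGpp, hGpm, hGmp, hGmm, hsum, hE1, hE2⟩ := hG
  have pos : ∀ A : H →L[ℂ] H, IsEffect A → A.IsPositive := fun A h => by
    simpa [opLE] using h.1
  have hE1sa : IsSelfAdjoint E1 := (pos E1 h1).isSelfAdjoint
  have hQ : (1 - E1) * (1 - E1) = 1 - E1 := by
    simp only [sub_mul, mul_sub, one_mul, mul_one, hproj]; abel
  have hQsa : IsSelfAdjoint (1 - E1) := by rw [IsSelfAdjoint, star_sub, star_one, hE1sa.star_eq]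
  have eq1 : E1 - Gpp = Gpm := by rw [← hE1]; abel
  have eq2 : E1 - Gpm = Gpp := by rw [← hE1]; abel
  have eq3 : (1 - E1) - Gmp = Gmm := by rw [← hsum, ← hE1]; abel
  have eq4 : (1 - E1) - Gmm = Gmp := by rw [← hsum, ← hE1]; abel
  obtain ⟨hpp_r, hpp_l⟩ := proj_absorb E1 Gpp hproj hE1sa (pos Gpp hGpp)
    (by rw [eq1]; exact pos Gpm hGpm)
  obtain ⟨hmp_r, hmp_l⟩ := proj_absorb (1 - E1) Gmp hQ hQsa (pos Gmp hGmp)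
    (by rw [eq3]; exact pos Gmm hGmm)
  have hE1Gmp : E1 * Gmp = 0 := by
    have := hmp_l; rw [sub_mul, one_mul] at this; exact sub_eq_self.mp this
  have hGmpE1 : Gmp * E1 = 0 := by
    have := hmp_r; rw [mul_sub, mul_one] at this; exact sub_eq_self.mp this
  have h12 : E1 * E2 = Gpp := by rw [← hE2, mul_add, hpp_l, hE1Gmp, add_zero]
  have h21 : E2 * E1 = Gpp := by rw [← hE2, add_mul, hpp_r, hGmpE1, add_zero]
  refine ⟨by rw [h12, h21], h12.symm, ?_, ?_, ?_⟩
  · rw [mul_sub, mul_one, h12, ← eq1]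
  · rw [sub_mul, one_mul, h12, ← hE2]; abel
  · rw [← eq3, mul_sub, mul_one, sub_mul, one_mul, h12, ← hE2]; abel
end
end

section
/- If the qubit observables E^{α,a} (with positive effect A(α,a)) and E^{β,b} (with positive effect A(β,b)) are jointly measurable, then ‖a + b‖ + ‖a − b‖ ≤ 2. -/
noncomputable section

open Matrix
open scoped RealInnerProductSpace ComplexOrder

abbrev V3 := EuclideanSpace ℝ (Fin 3)

def σ1 : Matrix (Fin 2) (Fin 2) ℂ := !![0, 1; 1, 0]
def σ2 : Matrix (Fin 2) (Fin 2) ℂ := !![0, -Complex.I; Complex.I, 0]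
def σ3 : Matrix (Fin 2) (Fin 2) ℂ := !![1, 0; 0, -1]

def dotSigma (a : V3) : Matrix (Fin 2) (Fin 2) ℂ :=
  (a 0 : ℂ) • σ1 + (a 1 : ℂ) • σ2 + (a 2 : ℂ) • σ3

def Amat (α : ℝ) (a : V3) : Matrix (Fin 2) (Fin 2) ℂ :=
  (2⁻¹ : ℂ) • ((α : ℂ) • (1 : Matrix (Fin 2) (Fin 2) ℂ) + dotSigma a)

def matLE (A B : Matrix (Fin 2) (Fin 2) ℂ) : Prop := (B - A).PosSemidef

def IsEffectM (A : Matrix (Fin 2) (Fin 2) ℂ) : Prop := matLE 0 A ∧ matLE A 1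

def JMeff (A B : Matrix (Fin 2) (Fin 2) ℂ) : Prop :=
  ∃ G, matLE 0 G ∧ matLE G A ∧ matLE G B ∧ matLE (A + B - 1) G

def cross3 (a b : V3) : V3 :=
  WithLp.toLp 2 ![a 1 * b 2 - a 2 * b 1, a 2 * b 0 - a 0 * b 2, a 0 * b 1 - a 1 * b 0]

def opNormM (M : Matrix (Fin 2) (Fin 2) ℂ) : ℝ :=
  ‖(Matrix.toEuclideanCLM (𝕜 := ℂ) (n := Fin 2) M : EuclideanSpace ℂ (Fin 2) →L[ℂ] EuclideanSpace ℂ (Fin 2))‖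

lemma dotSigma_eq (m : V3) : dotSigma m =
    !![(m 2 : ℂ), (m 0 : ℂ) - Complex.I * (m 1 : ℂ);
       (m 0 : ℂ) + Complex.I * (m 1 : ℂ), -(m 2 : ℂ)] := by
  ext i j
  fin_cases i <;> fin_cases j <;> simp [dotSigma, σ1, σ2, σ3] <;> ring

lemma norm_V3_sq (v : V3) : ‖v‖ ^ 2 = v 0 ^ 2 + v 1 ^ 2 + v 2 ^ 2 := by
  rw [EuclideanSpace.norm_eq]
  rw [Real.sq_sqrt (by positivity)]
  simp [Fin.sum_univ_three, Real.norm_eq_abs, sq_abs]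

lemma smul_psd {c : ℝ} (hc : 0 ≤ c) {N : Matrix (Fin 2) (Fin 2) ℂ}
    (hN : N.PosSemidef) : ((c : ℂ) • N).PosSemidef := by
  refine Matrix.PosSemidef.of_dotProduct_mulVec_nonneg ?_ ?_
  · simp [Matrix.IsHermitian, Matrix.conjTranspose_smul, hN.1.eq]
  · intro x
    rw [Matrix.smul_mulVec, dotProduct_smul]
    exact mul_nonneg (by exact_mod_cast hc) (hN.dotProduct_mulVec_nonneg x)

lemma psd_aux (m : V3) : ((‖m‖ : ℂ) • 1 - dotSigma m).PosSemidef := by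
  have hNe : (‖m‖ : ℂ) • (1 : Matrix (Fin 2) (Fin 2) ℂ) - dotSigma m =
      !![(‖m‖ : ℂ) - m 2, -((m 0 : ℂ) - Complex.I * m 1);
         -((m 0 : ℂ) + Complex.I * m 1), (‖m‖ : ℂ) + m 2] := by
    rw [dotSigma_eq, Matrix.one_fin_two]
    ext i j
    fin_cases i <;> fin_cases j <;> simp <;> ring
  by_cases hm : m = 0
  · have hz : (‖m‖ : ℂ) • (1 : Matrix (Fin 2) (Fin 2) ℂ) - dotSigma m = 0 := by
      rw [hNe]
      ext i j
      fin_cases i <;> fin_cases j <;> simp [hm]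
    rw [hz]
    exact Matrix.PosSemidef.zero
  · set N := (‖m‖ : ℂ) • (1 : Matrix (Fin 2) (Fin 2) ℂ) - dotSigma m with hNdef
    have hns : (0:ℝ) < ‖m‖ := norm_pos_iff.mpr hm
    have h2 : ((‖m‖ : ℂ))^2 = (m 0 : ℂ)^2 + (m 1 : ℂ)^2 + (m 2 : ℂ)^2 := by
      exact_mod_cast congrArg (fun r : ℝ => (r : ℂ)) (norm_V3_sq m)
    have hH : Nᴴ = N := by
      rw [hNe]
      ext i j
      fin_cases i <;> fin_cases j <;>
        simp [Matrix.conjTranspose_apply, Complex.ext_iff]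
    have hsq : N * N = ((2 * ‖m‖ : ℝ) : ℂ) • N := by
      rw [hNe, Matrix.mul_fin_two]
      ext i j
      fin_cases i <;> fin_cases j <;> simp <;> push_cast <;>
        first
        | linear_combination h2
        | linear_combination -h2
        | linear_combination h2 + ((m 1 : ℂ))^2 * Complex.I_sq
        | linear_combination h2 - ((m 1 : ℂ))^2 * Complex.I_sq
        | linear_combination -h2 + ((m 1 : ℂ))^2 * Complex.I_sq
        | linear_combination -h2 - ((m 1 : ℂ))^2 * Complex.I_sq
        | linear_combination (2:ℂ) * h2 + ((m 1 : ℂ))^2 * Complex.I_sq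
        | linear_combination (2:ℂ) * h2 - ((m 1 : ℂ))^2 * Complex.I_sq
        | linear_combination (-2:ℂ) * h2 + ((m 1 : ℂ))^2 * Complex.I_sq
        | linear_combination (-2:ℂ) * h2 - ((m 1 : ℂ))^2 * Complex.I_sq
        | ring
    have hrw : N = (((2 * ‖m‖)⁻¹ : ℝ) : ℂ) • (Nᴴ * N) := by
      rw [hH, hsq, smul_smul]
      rw [← Complex.ofReal_mul, inv_mul_cancel₀ (by positivity), Complex.ofReal_one, one_smul]
    rw [hrw]
    exact smul_psd (by positivity) (Matrix.posSemidef_conjTranspose_mul_self N)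


lemma Amat_eq (α : ℝ) (m : V3) : Amat α m =
    !![((α : ℂ) + m 2)/2, ((m 0 : ℂ) - Complex.I * m 1)/2;
       ((m 0 : ℂ) + Complex.I * m 1)/2, ((α : ℂ) - m 2)/2] := by
  rw [Amat, dotSigma_eq, Matrix.one_fin_two]
  ext i j
  fin_cases i <;> fin_cases j <;> simp <;> ring

lemma trace_re_nonneg {M : Matrix (Fin 2) (Fin 2) ℂ} (hM : M.PosSemidef) :
    0 ≤ M.trace.re := by
  have h0 := hM.re_dotProduct_nonneg ![1, 0]
  have h1 := hM.re_dotProduct_nonneg ![0, 1]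
  simp [dotProduct, Matrix.mulVec, Fin.sum_univ_two] at h0 h1
  rw [Matrix.trace_fin_two, Complex.add_re]
  linarith

lemma trace_mul_re_nonneg {M N : Matrix (Fin 2) (Fin 2) ℂ}
    (hM : M.PosSemidef) (hN : N.PosSemidef) : 0 ≤ (M * N).trace.re := by
  obtain ⟨B, rfl⟩ : ∃ B : Matrix (Fin 2) (Fin 2) ℂ, N = Bᴴ * B := by
    classical
    open scoped MatrixOrder in
    obtain ⟨X, hX, -, rfl⟩ := CFC.exists_sqrt_of_isSelfAdjoint_of_quasispectrumRestricts
      hN.isHermitian (QuasispectrumRestricts.nnreal_of_nonneg hN.nonneg)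
    exact ⟨X, by rw [← Matrix.star_eq_conjTranspose, hX.star_eq]⟩
  have : (M * (Bᴴ * B)).trace = (B * M * Bᴴ).trace := by
    rw [← Matrix.mul_assoc, Matrix.trace_mul_comm, Matrix.mul_assoc]
  rw [this]
  exact trace_re_nonneg (hM.mul_mul_conjTranspose_same B)

def fM (M : Matrix (Fin 2) (Fin 2) ℂ) : V3 :=
  WithLp.toLp 2 ![(M * σ1).trace.re, (M * σ2).trace.re, (M * σ3).trace.re]

lemma key {M : Matrix (Fin 2) (Fin 2) ℂ} (hM : M.PosSemidef) :
    ‖fM M‖ ≤ M.trace.re := by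
  set m := fM M with hm
  have hpsd := trace_mul_re_nonneg hM (psd_aux m)
  have hexp : (M * ((‖m‖ : ℂ) • 1 - dotSigma m)).trace.re
      = ‖m‖ * M.trace.re - (m 0 ^ 2 + m 1 ^ 2 + m 2 ^ 2) := by
    rw [Matrix.mul_sub, Matrix.trace_sub, Matrix.mul_smul, Matrix.trace_smul,
      Matrix.mul_one]
    rw [dotSigma, Matrix.mul_add, Matrix.mul_add, Matrix.trace_add, Matrix.trace_add,
      Matrix.mul_smul, Matrix.mul_smul, Matrix.mul_smul,
      Matrix.trace_smul, Matrix.trace_smul, Matrix.trace_smul]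
    simp only [Complex.sub_re, Complex.add_re, smul_eq_mul, Complex.mul_re,
      Complex.ofReal_re, Complex.ofReal_im, zero_mul, sub_zero]
    have e0 : m 0 = (M * σ1).trace.re := rfl
    have e1 : m 1 = (M * σ2).trace.re := rfl
    have e2 : m 2 = (M * σ3).trace.re := rfl
    rw [← e0, ← e1, ← e2]
    ring
  rw [hexp] at hpsd
  have hsq : m 0 ^ 2 + m 1 ^ 2 + m 2 ^ 2 = ‖m‖ ^ 2 := (norm_V3_sq m).symm
  rw [hsq] at hpsd
  rcases eq_or_lt_of_le (norm_nonneg m) with h0 | h0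
  · rw [← h0]
    exact trace_re_nonneg hM
  · nlinarith

lemma fM_sub (P Q : Matrix (Fin 2) (Fin 2) ℂ) : fM (P - Q) = fM P - fM Q := by
  ext i
  fin_cases i <;>
    simp [fM, Matrix.sub_mul, Matrix.trace_sub, Complex.sub_re]

lemma fM_add (P Q : Matrix (Fin 2) (Fin 2) ℂ) : fM (P + Q) = fM P + fM Q := by
  ext i
  fin_cases i <;>
    simp [fM, Matrix.add_mul, Matrix.trace_add, Complex.add_re]

lemma fM_Amat (α : ℝ) (a : V3) : fM (Amat α a) = a := by
  have h1 : (Amat α a * σ1).trace = (a 0 : ℂ) := by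
    rw [Amat_eq, σ1, Matrix.mul_fin_two, Matrix.trace_fin_two_of]
    ring
  have h2 : (Amat α a * σ2).trace = (a 1 : ℂ) := by
    rw [Amat_eq, σ2, Matrix.mul_fin_two, Matrix.trace_fin_two_of]
    have := Complex.I_sq
    linear_combination (-(a 1 : ℂ)) * Complex.I_sq
  have h3 : (Amat α a * σ3).trace = (a 2 : ℂ) := by
    rw [Amat_eq, σ3, Matrix.mul_fin_two, Matrix.trace_fin_two_of]
    ring
  ext i
  fin_cases i <;> simp [fM, h1, h2, h3]

lemma fM_one : fM 1 = 0 := by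
  ext i
  fin_cases i <;> simp [fM, Matrix.one_mul, σ1, σ2, σ3, Matrix.trace_fin_two_of]

lemma trace_Amat (α : ℝ) (a : V3) : (Amat α a).trace = (α : ℂ) := by
  rw [Amat_eq, Matrix.trace_fin_two_of]
  ring

theorem stmt6 (α β : ℝ) (a b : V3) (ha : ‖a‖ ≤ α) (ha2 : α ≤ 2 - ‖a‖)
    (hb : ‖b‖ ≤ β) (hb2 : β ≤ 2 - ‖b‖)
    (h : JMeff (Amat α a) (Amat β b)) :
    ‖a + b‖ + ‖a - b‖ ≤ 2 := by
  obtain ⟨G, hG0, hGA, hGB, hABG⟩ := h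
  have hG0' : G.PosSemidef := by
    have : (G - 0).PosSemidef := hG0
    simpa using this
  set g := fM G with hg
  set γ := G.trace.re with hγ
  have k1 : ‖g‖ ≤ γ := key hG0'
  have k2 : ‖a - g‖ ≤ α - γ := by
    have hk := key (M := Amat α a - G) hGA
    rw [fM_sub, fM_Amat, Matrix.trace_sub, Complex.sub_re, trace_Amat,
      Complex.ofReal_re] at hk
    exact hk
  have k3 : ‖b - g‖ ≤ β - γ := by
    have hk := key (M := Amat β b - G) hGB
    rw [fM_sub, fM_Amat, Matrix.trace_sub, Complex.sub_re, trace_Amat,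
      Complex.ofReal_re] at hk
    exact hk
  have k4 : ‖g - (a + b)‖ ≤ γ - (α + β) + 2 := by
    have hk := key (M := G - (Amat α a + Amat β b - 1)) hABG
    rw [fM_sub, fM_sub, fM_add, fM_Amat, fM_Amat, fM_one] at hk
    have htr : (G - (Amat α a + Amat β b - 1)).trace.re = γ - (α + β) + 2 := by
      rw [Matrix.trace_sub, Matrix.trace_sub, Matrix.trace_add, trace_Amat, trace_Amat,
        Matrix.trace_one]
      simp [Complex.sub_re, Complex.add_re]
      ring
    rw [htr] at hk
    simpa using hk
  have t1 : ‖a + b‖ ≤ ‖g - (a + b)‖ + ‖g‖ := by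
    have he : a + b = g - (g - (a + b)) := by abel
    calc ‖a + b‖ = ‖g - (g - (a + b))‖ := by rw [← he]
    _ ≤ ‖g‖ + ‖g - (a + b)‖ := norm_sub_le _ _
    _ = ‖g - (a + b)‖ + ‖g‖ := by ring
  have t2 : ‖a - b‖ ≤ ‖a - g‖ + ‖b - g‖ := by
    have he : a - b = (a - g) - (b - g) := by abel
    calc ‖a - b‖ = ‖(a - g) - (b - g)‖ := by rw [← he]
    _ ≤ ‖a - g‖ + ‖b - g‖ := norm_sub_le _ _
  linarith
end
end

section
/- For vectors a, b ∈ ℝ³ with ‖a‖ ≤ 1 and ‖b‖ ≤ 1, the inequality ‖a + b‖ + ‖a − b‖ ≤ 2 is equivalent to ‖a‖² + ‖b‖² ≤ 1 + (a·b)², and also equivalent to ‖a × b‖² ≤ (1 − ‖a‖²)(1 − ‖b‖²). -/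
noncomputable section

open Matrix
open scoped RealInnerProductSpace ComplexOrder

lemma lagrange_cross (a b : V3) : ‖cross3 a b‖ ^ 2 = ‖a‖ ^ 2 * ‖b‖ ^ 2 - ⟪a, b⟫ ^ 2 := by
  rw [← real_inner_self_eq_norm_sq, ← real_inner_self_eq_norm_sq, ← real_inner_self_eq_norm_sq]
  simp only [PiLp.inner_apply, RCLike.inner_apply, conj_trivial, Fin.sum_univ_three, cross3]
  simp only [Matrix.cons_val_zero, Matrix.cons_val_one, Matrix.head_cons, Matrix.cons_val_two,
    Matrix.tail_cons]
  ring

lemma main_iff (a b : V3) (ha : ‖a‖ ≤ 1) (hb : ‖b‖ ≤ 1) :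
    ‖a + b‖ + ‖a - b‖ ≤ 2 ↔ ‖a‖ ^ 2 + ‖b‖ ^ 2 ≤ 1 + ⟪a, b⟫ ^ 2 := by
  have hs := norm_add_sq_real a b
  have ht := norm_sub_sq_real a b
  have hs0 : (0:ℝ) ≤ ‖a + b‖ := norm_nonneg _
  have ht0 : (0:ℝ) ≤ ‖a - b‖ := norm_nonneg _
  have ha0 : (0:ℝ) ≤ ‖a‖ := norm_nonneg _
  have hb0 : (0:ℝ) ≤ ‖b‖ := norm_nonneg _
  constructor
  · intro h
    have hst : ‖a + b‖ * ‖a - b‖ ≤ 2 - ‖a‖^2 - ‖b‖^2 := by nlinarith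
    nlinarith [sq_nonneg (‖a+b‖*‖a-b‖), mul_nonneg hs0 ht0]
  · intro h
    have h2 : 2 - ‖a‖^2 - ‖b‖^2 ≥ 0 := by nlinarith
    have hkey : (‖a + b‖ * ‖a - b‖)^2 ≤ (2 - ‖a‖^2 - ‖b‖^2)^2 := by nlinarith
    have hst : ‖a + b‖ * ‖a - b‖ ≤ 2 - ‖a‖^2 - ‖b‖^2 := by
      nlinarith [mul_nonneg hs0 ht0]
    nlinarith [sq_nonneg (‖a+b‖ + ‖a-b‖ - 2)]

theorem stmt8 (a b : V3) (ha : ‖a‖ ≤ 1) (hb : ‖b‖ ≤ 1) :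
    (‖a + b‖ + ‖a - b‖ ≤ 2 ↔ ‖a‖ ^ 2 + ‖b‖ ^ 2 ≤ 1 + ⟪a, b⟫ ^ 2) ∧
    (‖a + b‖ + ‖a - b‖ ≤ 2 ↔ ‖cross3 a b‖ ^ 2 ≤ (1 - ‖a‖ ^ 2) * (1 - ‖b‖ ^ 2)) := by
  refine ⟨main_iff a b ha hb, (main_iff a b ha hb).trans ?_⟩
  rw [lagrange_cross]
  constructor <;> intro h <;> nlinarith
end
end

section
/- Joint measurability of the qubit effects A(α,a) and A(β,b) is equivalent to the existence of γ ≥ 0 and g ∈ ℝ³ such that ‖g‖ ≤ γ, ‖a − g‖ ≤ α − γ, ‖b − g‖ ≤ β − γ, and ‖a + b − g‖ ≤ 2 + γ − α − β. That is, the four operator inequalities 0 ≤ G, G ≤ A(α,a), G ≤ A(β,b), A(α,a)+A(β,b)−I ≤ G for G = A(γ,g) are equivalent to these four vector inequalities. -/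
noncomputable section

open Matrix
open scoped RealInnerProductSpace ComplexOrder

-- auxiliary lemmas

lemma trace_eq_sum_eig {n : Type*} [Fintype n] [DecidableEq n] (A : Matrix n n ℂ)
    (hA : A.IsHermitian) : A.trace = ∑ i, (hA.eigenvalues i : ℂ) := by
  exact hA.trace_eq_sum_eigenvalues

lemma amat_entries (γ : ℝ) (g : V3) :
    Amat γ g = !![((γ + g 2 : ℝ) : ℂ)/2, ((g 0 : ℂ) - (g 1 : ℂ)*Complex.I)/2;
                  ((g 0 : ℂ) + (g 1 : ℂ)*Complex.I)/2, ((γ - g 2 : ℝ) : ℂ)/2] := by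
  ext i j
  fin_cases i <;> fin_cases j <;>
    simp [Amat, dotSigma, σ1, σ2, σ3, Matrix.one_apply] <;> push_cast <;> ring

lemma amat_herm (γ : ℝ) (g : V3) : (Amat γ g).IsHermitian := by
  rw [amat_entries]
  ext i j
  fin_cases i <;> fin_cases j <;>
    simp [Matrix.conjTranspose_apply, Complex.ext_iff] <;> ring

lemma norm_sq_v3 (g : V3) : ‖g‖^2 = g 0 ^ 2 + g 1 ^ 2 + g 2 ^ 2 := by
  rw [EuclideanSpace.norm_eq, Real.sq_sqrt (by positivity)]
  simp [Fin.sum_univ_three, sq_abs]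

lemma amat_trace (γ : ℝ) (g : V3) : (Amat γ g).trace = (γ : ℂ) := by
  rw [amat_entries]
  simp [Matrix.trace_fin_two]
  push_cast; ring

lemma amat_det (γ : ℝ) (g : V3) :
    (Amat γ g).det = (((γ^2 - ‖g‖^2)/4 : ℝ) : ℂ) := by
  rw [amat_entries]
  rw [Matrix.det_fin_two_of]
  have := norm_sq_v3 g
  push_cast [this]
  ring_nf
  rw [Complex.I_sq]
  ring

lemma amat_psd_iff (γ : ℝ) (g : V3) : (Amat γ g).PosSemidef ↔ ‖g‖ ≤ γ := by
  have hH := amat_herm γ g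
  have htr : (γ : ℂ) = ∑ i, (hH.eigenvalues i : ℂ) := by
    rw [← trace_eq_sum_eig _ hH, amat_trace]
  have htr' : γ = hH.eigenvalues 0 + hH.eigenvalues 1 := by
    have := htr
    rw [Fin.sum_univ_two] at this
    exact_mod_cast this
  have hdet : ((γ^2 - ‖g‖^2)/4 : ℝ) = hH.eigenvalues 0 * hH.eigenvalues 1 := by
    have := hH.det_eq_prod_eigenvalues
    rw [amat_det, Fin.prod_univ_two] at this
    have h2 : (((γ ^ 2 - ‖g‖ ^ 2) / 4 : ℝ) : ℂ) = (hH.eigenvalues 0 : ℂ) * (hH.eigenvalues 1 : ℂ) := this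
    exact_mod_cast h2
  constructor
  · intro h
    have h0 := h.eigenvalues_nonneg 0
    have h1 := h.eigenvalues_nonneg 1
    have hg : 0 ≤ ‖g‖ := norm_nonneg g
    nlinarith
  · intro h
    apply hH.posSemidef_iff_eigenvalues_nonneg.mpr
    have hg : 0 ≤ ‖g‖ := norm_nonneg g
    have hp : 0 ≤ hH.eigenvalues 0 * hH.eigenvalues 1 := by nlinarith
    have h0 : 0 ≤ hH.eigenvalues 0 := by nlinarith
    have h1 : 0 ≤ hH.eigenvalues 1 := by nlinarith
    intro i
    fin_cases i
    · exact h0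
    · exact h1

lemma amat_sub (α γ : ℝ) (a g : V3) :
    Amat α a - Amat γ g = Amat (α - γ) (a - g) := by
  ext i j
  fin_cases i <;> fin_cases j <;>
    simp [Amat, dotSigma, σ1, σ2, σ3, Matrix.one_apply, PiLp.sub_apply] <;>
    push_cast <;> ring

lemma amat_addsub (α β : ℝ) (a b : V3) :
    Amat α a + Amat β b - 1 = Amat (α + β - 2) (a + b) := by
  ext i j
  fin_cases i <;> fin_cases j <;>
    simp [Amat, dotSigma, σ1, σ2, σ3, Matrix.one_apply, PiLp.add_apply] <;>
    push_cast <;> ring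

lemma herm_decomp (G : Matrix (Fin 2) (Fin 2) ℂ) (hG : G.IsHermitian) :
    ∃ (γ : ℝ) (g : V3), G = Amat γ g := by
  refine ⟨(G 0 0).re + (G 1 1).re,
    (WithLp.equiv 2 (Fin 3 → ℝ)).symm ![2*(G 0 1).re, -2*(G 0 1).im, (G 0 0).re - (G 1 1).re], ?_⟩
  have h00 : G 0 0 = ((G 0 0).re : ℂ) := by
    have := congrFun (congrFun hG 0) 0
    rw [Matrix.conjTranspose_apply] at this
    exact (Complex.conj_eq_iff_re.mp this).symm
  have h11 : G 1 1 = ((G 1 1).re : ℂ) := by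
    have := congrFun (congrFun hG 1) 1
    rw [Matrix.conjTranspose_apply] at this
    exact (Complex.conj_eq_iff_re.mp this).symm
  have h10 : G 1 0 = (starRingEnd ℂ) (G 0 1) := by
    have := congrFun (congrFun hG 1) 0
    rw [Matrix.conjTranspose_apply] at this
    exact this.symm
  rw [amat_entries]
  ext i j
  fin_cases i <;> fin_cases j <;>
    simp [WithLp.equiv_symm_apply, h10] <;>
    [rw [h00]; skip; skip; rw [h11]] <;>
    push_cast <;> simp [Complex.ext_iff] <;> ring

theorem stmt9 (α β : ℝ) (a b : V3) (ha : ‖a‖ ≤ α) (ha2 : α ≤ 2 - ‖a‖)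
    (hb : ‖b‖ ≤ β) (hb2 : β ≤ 2 - ‖b‖) :
    (∀ (γ : ℝ) (g : V3),
      (matLE 0 (Amat γ g) ∧ matLE (Amat γ g) (Amat α a) ∧ matLE (Amat γ g) (Amat β b) ∧
        matLE (Amat α a + Amat β b - 1) (Amat γ g)) ↔
      (‖g‖ ≤ γ ∧ ‖a - g‖ ≤ α - γ ∧ ‖b - g‖ ≤ β - γ ∧ ‖a + b - g‖ ≤ 2 + γ - α - β)) ∧
    (JMeff (Amat α a) (Amat β b) ↔
      ∃ (γ : ℝ) (g : V3), 0 ≤ γ ∧ ‖g‖ ≤ γ ∧ ‖a - g‖ ≤ α - γ ∧ ‖b - g‖ ≤ β - γ ∧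
        ‖a + b - g‖ ≤ 2 + γ - α - β) := by
  have key : ∀ (γ : ℝ) (g : V3),
      (matLE 0 (Amat γ g) ∧ matLE (Amat γ g) (Amat α a) ∧ matLE (Amat γ g) (Amat β b) ∧
        matLE (Amat α a + Amat β b - 1) (Amat γ g)) ↔
      (‖g‖ ≤ γ ∧ ‖a - g‖ ≤ α - γ ∧ ‖b - g‖ ≤ β - γ ∧ ‖a + b - g‖ ≤ 2 + γ - α - β) := by
    intro γ g
    have e1 : matLE 0 (Amat γ g) ↔ ‖g‖ ≤ γ := by
      rw [matLE, sub_zero, amat_psd_iff]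
    have e2 : matLE (Amat γ g) (Amat α a) ↔ ‖a - g‖ ≤ α - γ := by
      rw [matLE, amat_sub, amat_psd_iff]
    have e3 : matLE (Amat γ g) (Amat β b) ↔ ‖b - g‖ ≤ β - γ := by
      rw [matLE, amat_sub, amat_psd_iff]
    have e4 : matLE (Amat α a + Amat β b - 1) (Amat γ g) ↔ ‖a + b - g‖ ≤ 2 + γ - α - β := by
      rw [matLE, amat_addsub, amat_sub, amat_psd_iff, norm_sub_rev]
      constructor <;> intro h <;> linarith
    rw [e1, e2, e3, e4]
  refine ⟨key, ?_⟩
  constructor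
  · rintro ⟨G, hG0, hGA, hGB, hGI⟩
    have hherm : G.IsHermitian := by
      have : G.PosSemidef := by rw [matLE, sub_zero] at hG0; exact hG0
      exact this.1
    obtain ⟨γ, g, rfl⟩ := herm_decomp G hherm
    have := (key γ g).mp ⟨hG0, hGA, hGB, hGI⟩
    exact ⟨γ, g, le_trans (norm_nonneg g) this.1, this⟩
  · rintro ⟨γ, g, _, h1, h2, h3, h4⟩
    exact ⟨Amat γ g, (key γ g).mpr ⟨h1, h2, h3, h4⟩⟩
end
end

section
/- Let a, b ∈ ℝ³ with ‖a‖, ‖b‖ ≤ 1 and let u be a unit vector orthogonal to both a and b, U := u·σ. If E^{1,a} and E^{1,b} are jointly measurable, then they possess a U-covariant joint observable G, i.e., one satisfying UG₊₊U = G₋₋ and UG₊₋U = G₋₊. -/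
noncomputable section

open Matrix
open scoped RealInnerProductSpace ComplexOrder

def IsJointObsM (E1 E2 Gpp Gpm Gmp Gmm : Matrix (Fin 2) (Fin 2) ℂ) : Prop :=
  Gpp.PosSemidef ∧ Gpm.PosSemidef ∧ Gmp.PosSemidef ∧ Gmm.PosSemidef ∧
  Gpp + Gpm + Gmp + Gmm = 1 ∧ Gpp + Gpm = E1 ∧ Gpp + Gmp = E2

set_option linter.unnecessarySeqFocus false

lemma dotSigma_anticomm (a b : V3) :
    dotSigma a * dotSigma b + dotSigma b * dotSigma a
      = ((2 : ℂ) * ((a 0 : ℂ) * b 0 + (a 1 : ℂ) * b 1 + (a 2 : ℂ) * b 2)) • 1 := by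
  ext i j
  fin_cases i <;> fin_cases j <;>
    simp [dotSigma, σ1, σ2, σ3, Matrix.mul_apply, Fin.sum_univ_two, Matrix.one_apply] <;>
    ring_nf <;> simp [Complex.I_sq] <;> ring

lemma dotSigma_herm (a : V3) : (dotSigma a).IsHermitian := by
  ext i j
  fin_cases i <;> fin_cases j <;>
    simp [dotSigma, σ1, σ2, σ3, Matrix.conjTranspose_apply, Complex.ext_iff]

lemma inner_eq' (u a : V3) : ⟪u, a⟫ = u 0 * a 0 + u 1 * a 1 + u 2 * a 2 := by
  simp [PiLp.inner_apply, Fin.sum_univ_three]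
  ring

lemma psd_half {A : Matrix (Fin 2) (Fin 2) ℂ} (h : A.PosSemidef) :
    ((2⁻¹ : ℂ) • A).PosSemidef := by
  constructor
  · unfold Matrix.IsHermitian
    rw [conjTranspose_smul, h.1.eq]
    norm_num
  · intro x
    exact (h.smul (a := (2⁻¹ : ℂ)) (by norm_num [Complex.le_def])).2 x

theorem stmt11 (a b u : V3) (ha : ‖a‖ ≤ 1) (hb : ‖b‖ ≤ 1) (hu : ‖u‖ = 1)
    (hua : ⟪u, a⟫ = 0) (hub : ⟪u, b⟫ = 0)
    (h : ∃ Gpp Gpm Gmp Gmm, IsJointObsM (Amat 1 a) (Amat 1 b) Gpp Gpm Gmp Gmm) :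
    ∃ Gpp Gpm Gmp Gmm, IsJointObsM (Amat 1 a) (Amat 1 b) Gpp Gpm Gmp Gmm ∧
      dotSigma u * Gpp * dotSigma u = Gmm ∧ dotSigma u * Gpm * dotSigma u = Gmp := by
  obtain ⟨Gpp, Gpm, Gmp, Gmm, hpp, hpm, hmp, hmm, hsum, h1, h2⟩ := h
  set U := dotSigma u with hUdef
  have huu : (u 0 : ℂ) * u 0 + (u 1 : ℂ) * u 1 + (u 2 : ℂ) * u 2 = 1 := by
    have h0 : ⟪u, u⟫ = 1 := by
      rw [real_inner_self_eq_norm_sq, hu]; norm_num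
    rw [inner_eq'] at h0
    exact_mod_cast congrArg Complex.ofReal h0
  have hU2 : U * U = 1 := by
    have h0 := dotSigma_anticomm u u
    rw [huu, mul_one] at h0
    have h2' : (2 : ℂ) • (U * U) = (2 : ℂ) • (1 : Matrix (Fin 2) (Fin 2) ℂ) := by
      rw [two_smul]; exact h0
    exact smul_right_injective (Matrix (Fin 2) (Fin 2) ℂ) two_ne_zero h2'
  -- anticommutation: U S U = -S for S = dotSigma c, u ⊥ c
  have anti : ∀ c : V3, ⟪u, c⟫ = 0 → U * dotSigma c * U = - dotSigma c := by
    intro c hc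
    have h0 := dotSigma_anticomm u c
    rw [inner_eq'] at hc
    have hc' : (u 0 : ℂ) * c 0 + (u 1 : ℂ) * c 1 + (u 2 : ℂ) * c 2 = 0 := by
      exact_mod_cast congrArg Complex.ofReal hc
    rw [hc', mul_zero, zero_smul] at h0
    have hUc : U * dotSigma c = -(dotSigma c * U) := eq_neg_of_add_eq_zero_left h0
    calc U * dotSigma c * U = -(dotSigma c * U) * U := by rw [hUc]
      _ = -(dotSigma c * (U * U)) := by rw [neg_mul, mul_assoc]
      _ = - dotSigma c := by rw [hU2, mul_one]
  -- conjugation of effects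
  have hconjE : ∀ c : V3, ⟪u, c⟫ = 0 → U * Amat 1 c * U = 1 - Amat 1 c := by
    intro c hc
    have hac := anti c hc
    have expand : U * Amat 1 c * U
        = (2⁻¹ : ℂ) • (U * U + U * dotSigma c * U) := by
      simp only [Amat, Complex.ofReal_one, one_smul]
      rw [Matrix.mul_smul, Matrix.smul_mul, mul_add, add_mul, mul_one]
    rw [expand, hU2, hac]
    simp only [Amat, Complex.ofReal_one, one_smul]
    module
  have hE1 := hconjE a hua
  have hE2 := hconjE b hub
  -- PSD under conjugation
  have conjPSD : ∀ {M : Matrix (Fin 2) (Fin 2) ℂ}, M.PosSemidef → (U * M * U).PosSemidef := by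
    intro M hM
    have := hM.mul_mul_conjTranspose_same U
    rwa [(dotSigma_herm u).eq] at this
  -- the symmetrized observable
  refine ⟨(2⁻¹ : ℂ) • (Gpp + U * Gmm * U), (2⁻¹ : ℂ) • (Gpm + U * Gmp * U),
          (2⁻¹ : ℂ) • (Gmp + U * Gpm * U), (2⁻¹ : ℂ) • (Gmm + U * Gpp * U),
          ⟨psd_half (hpp.add (conjPSD hmm)), psd_half (hpm.add (conjPSD hmp)),
           psd_half (hmp.add (conjPSD hpm)), psd_half (hmm.add (conjPSD hpp)), ?_, ?_, ?_⟩,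
          ?_, ?_⟩
  · -- sum = 1
    have key : U * Gmm * U + U * Gmp * U + U * Gpm * U + U * Gpp * U
        = U * (Gpp + Gpm + Gmp + Gmm) * U := by noncomm_ring
    rw [hsum, mul_one, hU2] at key
    have : (Gpp + U * Gmm * U) + (Gpm + U * Gmp * U) + (Gmp + U * Gpm * U) + (Gmm + U * Gpp * U)
        = (Gpp + Gpm + Gmp + Gmm) + (U * Gmm * U + U * Gmp * U + U * Gpm * U + U * Gpp * U) := by
      abel
    rw [← smul_add, ← smul_add, ← smul_add, this, key, hsum]
    module
  · -- first marginal
    have hm : Gmm + Gmp = 1 - Amat 1 a := by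
      rw [← h1, ← hsum]; abel
    have key : U * Gmm * U + U * Gmp * U = U * (Gmm + Gmp) * U := by noncomm_ring
    rw [hm, Matrix.mul_sub, Matrix.sub_mul, mul_one, hU2, hE1] at key
    have expand : (Gpp + U * Gmm * U) + (Gpm + U * Gmp * U)
        = (Gpp + Gpm) + (U * Gmm * U + U * Gmp * U) := by abel
    rw [← smul_add, expand, key, h1]
    module
  · -- second marginal
    have hm : Gmm + Gpm = 1 - Amat 1 b := by
      rw [← h2, ← hsum]; abel
    have key : U * Gmm * U + U * Gpm * U = U * (Gmm + Gpm) * U := by noncomm_ring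
    rw [hm, Matrix.mul_sub, Matrix.sub_mul, mul_one, hU2, hE2] at key
    have expand : (Gpp + U * Gmm * U) + (Gmp + U * Gpm * U)
        = (Gpp + Gmp) + (U * Gmm * U + U * Gpm * U) := by abel
    rw [← smul_add, expand, key, h2]
    module
  · -- covariance pp ↦ mm
    rw [Matrix.mul_smul, Matrix.smul_mul]
    congr 1
    rw [mul_add, add_mul]
    have : U * (U * Gmm * U) * U = (U * U) * Gmm * (U * U) := by noncomm_ring
    rw [this, hU2, one_mul, mul_one]
    abel
  · -- covariance pm ↦ mp
    rw [Matrix.mul_smul, Matrix.smul_mul]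
    congr 1
    rw [mul_add, add_mul]
    have : U * (U * Gmp * U) * U = (U * U) * Gmp * (U * U) := by noncomm_ring
    rw [this, hU2, one_mul, mul_one]
    abel
end
end

section
/- The sharpness S(E^{α,a}) := ‖a‖(1 − |1 − α|) of a qubit effect A(α,a) satisfies: S ∈ [0,1]; S = 1 if and only if A(α,a) is a nontrivial projection (i.e., α = ‖a‖ = 1); and S = 0 if and only if A(α,a) is trivial (i.e., a = 0, equivalently A(α,a) = (α/2)I). -/
noncomputable section

open Matrix
open scoped RealInnerProductSpace ComplexOrder

theorem stmt15 (α : ℝ) (a : V3) (ha : ‖a‖ ≤ α) (ha2 : α ≤ 2 - ‖a‖) :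
    (0 ≤ ‖a‖ * (1 - |1 - α|) ∧ ‖a‖ * (1 - |1 - α|) ≤ 1) ∧
    (‖a‖ * (1 - |1 - α|) = 1 ↔ (α = 1 ∧ ‖a‖ = 1)) ∧
    (‖a‖ * (1 - |1 - α|) = 0 ↔ a = 0) := by
  have hn : 0 ≤ ‖a‖ := norm_nonneg a
  have habs : |1 - α| ≤ 1 - ‖a‖ := abs_le.mpr ⟨by linarith, by linarith⟩
  have habs0 : 0 ≤ |1 - α| := abs_nonneg _
  refine ⟨⟨by nlinarith, by nlinarith⟩, ⟨?_, ?_⟩, ⟨?_, ?_⟩⟩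
  · intro h
    have hα : α = 1 := by
      by_contra hne
      have : 0 < |1 - α| := abs_pos.mpr (by intro hx; apply hne; linarith)
      nlinarith
    refine ⟨hα, ?_⟩
    rw [hα] at h; simp at h; linarith [h]
  · rintro ⟨h1, h2⟩; rw [h1, h2]; simp
  · intro h
    rcases mul_eq_zero.mp h with h0 | h0
    · exact norm_eq_zero.mp h0
    · exact norm_eq_zero.mp (le_antisymm (by linarith) hn)
  · intro h; rw [h]; simp
end
end

section
/- Let n, m be unit vectors in ℝ³ with angle θ ∈ (0, π/2] between them. For all vectors a, b ∈ ℝ³ with ‖a‖,‖b‖ ≤ 1 satisfying ‖a+b‖ + ‖a−b‖ ≤ 2, the inequality (1/2)‖a − n‖ + (1/2)‖b − m‖ ≥ (1/√2)(cos(θ/2) + sin(θ/2) − 1) holds; moreover equality is attainable with ‖a−n‖ = ‖b−m‖. -/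
noncomputable section

open Matrix
open scoped RealInnerProductSpace ComplexOrder

private lemma eq_of_sq_eq' {x y : ℝ} (hx : 0 ≤ x) (hy : 0 ≤ y) (h : x ^ 2 = y ^ 2) : x = y := by
  have h2 : (x - y) * (x + y) = 0 := by ring_nf; nlinarith
  rcases mul_eq_zero.mp h2 with h3 | h3 <;> [skip; skip] <;> linarith [h3]

set_option maxHeartbeats 1000000 in
theorem stmt17 (θ : ℝ) (hθ : θ ∈ Set.Ioc 0 (Real.pi / 2)) (n m : V3)
    (hn : ‖n‖ = 1) (hm : ‖m‖ = 1) (hnm : ⟪n, m⟫ = Real.cos θ) :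
    (∀ a b : V3, ‖a‖ ≤ 1 → ‖b‖ ≤ 1 → ‖a + b‖ + ‖a - b‖ ≤ 2 →
      (Real.sqrt 2)⁻¹ * (Real.cos (θ / 2) + Real.sin (θ / 2) - 1) ≤
        2⁻¹ * ‖a - n‖ + 2⁻¹ * ‖b - m‖) ∧
    (∃ a b : V3, ‖a‖ ≤ 1 ∧ ‖b‖ ≤ 1 ∧ ‖a + b‖ + ‖a - b‖ ≤ 2 ∧ ‖a - n‖ = ‖b - m‖ ∧
      2⁻¹ * ‖a - n‖ + 2⁻¹ * ‖b - m‖ =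
        (Real.sqrt 2)⁻¹ * (Real.cos (θ / 2) + Real.sin (θ / 2) - 1)) := by
  obtain ⟨hθ0, hθπ⟩ := hθ
  have hpi := Real.pi_pos
  set c := Real.cos (θ / 2) with hc_def
  set s := Real.sin (θ / 2) with hs_def
  have hc : 0 < c := Real.cos_pos_of_mem_Ioo ⟨by linarith, by linarith⟩
  have hs : 0 < s := Real.sin_pos_of_pos_of_lt_pi (by linarith) (by linarith)
  have hc1 : c ≤ 1 := Real.cos_le_one _
  have hs1 : s ≤ 1 := Real.sin_le_one _
  have hcs : c ^ 2 + s ^ 2 = 1 := by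
    rw [hc_def, hs_def, add_comm]; exact Real.sin_sq_add_cos_sq _
  have hcos : Real.cos θ = 2 * c ^ 2 - 1 := by
    rw [show θ = 2 * (θ / 2) by ring, Real.cos_two_mul]
  have hcs1 : 1 ≤ c + s := by nlinarith
  have hr2 : Real.sqrt 2 * Real.sqrt 2 = 2 := Real.mul_self_sqrt (by norm_num)
  have hr : (0:ℝ) < Real.sqrt 2 := Real.sqrt_pos.mpr (by norm_num)
  -- norms of n±m
  have hpn : ‖n + m‖ = 2 * c := by
    apply eq_of_sq_eq' (norm_nonneg _) (by positivity)
    rw [norm_add_sq_real, hn, hm, hnm, hcos]; ring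
  have hqn : ‖n - m‖ = 2 * s := by
    apply eq_of_sq_eq' (norm_nonneg _) (by positivity)
    rw [norm_sub_sq_real, hn, hm, hnm, hcos]; nlinarith
  obtain ⟨u, hu_def⟩ : ∃ u : V3, u = (2 * c)⁻¹ • (n + m) := ⟨_, rfl⟩
  obtain ⟨v, hv_def⟩ : ∃ v : V3, v = (2 * s)⁻¹ • (n - m) := ⟨_, rfl⟩
  have hu : ‖u‖ = 1 := by
    rw [hu_def, norm_smul, hpn, Real.norm_eq_abs, abs_of_pos (by positivity)]
    field_simp
  have hv : ‖v‖ = 1 := by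
    rw [hv_def, norm_smul, hqn, Real.norm_eq_abs, abs_of_pos (by positivity)]
    field_simp
  have huv : ⟪u, v⟫ = 0 := by
    rw [hu_def, hv_def, real_inner_smul_left, real_inner_smul_right]
    have : ⟪n + m, n - m⟫ = 0 := by
      simp only [inner_add_left, inner_sub_right, real_inner_self_eq_norm_sq, hn, hm]
      rw [real_inner_comm m n]; ring
    rw [this]; ring
  have hupv : ‖u + v‖ = Real.sqrt 2 := by
    apply eq_of_sq_eq' (norm_nonneg _) (Real.sqrt_nonneg _)
    rw [norm_add_sq_real, hu, hv, huv]; nlinarith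
  have humv : ‖u - v‖ = Real.sqrt 2 := by
    apply eq_of_sq_eq' (norm_nonneg _) (Real.sqrt_nonneg _)
    rw [norm_sub_sq_real, hu, hv, huv]; nlinarith
  have hnu : ⟪n, u⟫ + ⟪m, u⟫ = 2 * c := by
    have h1 : ⟪n + m, u⟫ = (2 * c)⁻¹ * ‖n + m‖ ^ 2 := by
      rw [hu_def, real_inner_smul_right, real_inner_self_eq_norm_sq]
    rw [inner_add_left, hpn] at h1
    rw [h1]; field_simp
  have hnv : ⟪n, v⟫ - ⟪m, v⟫ = 2 * s := by
    have h1 : ⟪n - m, v⟫ = (2 * s)⁻¹ * ‖n - m‖ ^ 2 := by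
      rw [hv_def, real_inner_smul_right, real_inner_self_eq_norm_sq]
    rw [inner_sub_left, hqn] at h1
    rw [h1]; field_simp
  have hn_eq : n = c • u + s • v := by
    rw [hu_def, hv_def, smul_smul, smul_smul,
      show c * (2 * c)⁻¹ = 1 / 2 by field_simp,
      show s * (2 * s)⁻¹ = 1 / 2 by field_simp]
    module
  have hm_eq : m = c • u - s • v := by
    rw [hu_def, hv_def, smul_smul, smul_smul,
      show c * (2 * c)⁻¹ = 1 / 2 by field_simp,
      show s * (2 * s)⁻¹ = 1 / 2 by field_simp]
    module
  constructor
  · intro a b ha hb hab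
    have h1 : ⟪n - a, u + v⟫ ≤ ‖a - n‖ * Real.sqrt 2 := by
      calc ⟪n - a, u + v⟫ ≤ ‖n - a‖ * ‖u + v‖ := real_inner_le_norm _ _
        _ = ‖a - n‖ * Real.sqrt 2 := by rw [hupv, norm_sub_rev]
    have h2 : ⟪m - b, u - v⟫ ≤ ‖b - m‖ * Real.sqrt 2 := by
      calc ⟪m - b, u - v⟫ ≤ ‖m - b‖ * ‖u - v‖ := real_inner_le_norm _ _
        _ = ‖b - m‖ * Real.sqrt 2 := by rw [humv, norm_sub_rev]
    have h3 : ⟪a + b, u⟫ ≤ ‖a + b‖ := by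
      have := real_inner_le_norm (a + b) u; rwa [hu, mul_one] at this
    have h4 : ⟪a - b, v⟫ ≤ ‖a - b‖ := by
      have := real_inner_le_norm (a - b) v; rwa [hv, mul_one] at this
    have e1 : ⟪n - a, u + v⟫ + ⟪m - b, u - v⟫ =
        2 * c + 2 * s - ⟪a + b, u⟫ - ⟪a - b, v⟫ := by
      simp only [inner_add_left, inner_sub_left, inner_add_right, inner_sub_right]
      linarith
    have key : 2 * c + 2 * s - 2 ≤ ‖a - n‖ * Real.sqrt 2 + ‖b - m‖ * Real.sqrt 2 := by
      linarith
    rw [inv_mul_le_iff₀ hr]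
    nlinarith [norm_nonneg (a - n), norm_nonneg (b - m)]
  · obtain ⟨t, ht_def⟩ : ∃ t : ℝ, t = (c + s - 1) / 2 := ⟨_, rfl⟩
    have ht : 0 ≤ t := by rw [ht_def]; linarith
    have hx : 0 ≤ c - t := by rw [ht_def]; linarith
    have hy : 0 ≤ s - t := by rw [ht_def]; linarith
    have hxy : (c - t) + (s - t) = 1 := by rw [ht_def]; ring
    have norm_comb : ∀ x y : ℝ, ‖x • u + y • v‖ ^ 2 = x ^ 2 + y ^ 2 := by
      intro x y
      rw [norm_add_sq_real, norm_smul, norm_smul, real_inner_smul_left,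
        real_inner_smul_right, huv, hu, hv, Real.norm_eq_abs, Real.norm_eq_abs,
        mul_pow, mul_pow, sq_abs, sq_abs]
      ring
    have norm_comb' : ∀ x y : ℝ, ‖x • u - y • v‖ ^ 2 = x ^ 2 + y ^ 2 := by
      intro x y
      rw [sub_eq_add_neg, ← neg_smul, norm_comb x (-y)]
      ring
    have han : ((c - t) • u + (s - t) • v) - n = (-t) • (u + v) := by
      rw [hn_eq]; module
    have hbm : ((c - t) • u - (s - t) • v) - m = (-t) • (u - v) := by
      rw [hm_eq]; module
    have hA : ‖((c - t) • u + (s - t) • v) - n‖ = t * Real.sqrt 2 := by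
      rw [han, norm_smul, hupv, Real.norm_eq_abs, abs_neg, abs_of_nonneg ht]
    have hB : ‖((c - t) • u - (s - t) • v) - m‖ = t * Real.sqrt 2 := by
      rw [hbm, norm_smul, humv, Real.norm_eq_abs, abs_neg, abs_of_nonneg ht]
    refine ⟨(c - t) • u + (s - t) • v, (c - t) • u - (s - t) • v, ?_, ?_, ?_, ?_, ?_⟩
    · nlinarith [norm_comb (c - t) (s - t),
        norm_nonneg ((c - t) • u + (s - t) • v)]
    · nlinarith [norm_comb' (c - t) (s - t),
        norm_nonneg ((c - t) • u - (s - t) • v)]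
    · have h1 : ((c - t) • u + (s - t) • v) + ((c - t) • u - (s - t) • v)
          = (2 * (c - t)) • u := by module
      have h2 : ((c - t) • u + (s - t) • v) - ((c - t) • u - (s - t) • v)
          = (2 * (s - t)) • v := by module
      rw [h1, h2, norm_smul, norm_smul, hu, hv, Real.norm_eq_abs, Real.norm_eq_abs,
        abs_of_nonneg (by linarith), abs_of_nonneg (by linarith)]
      linarith
    · rw [hA, hB]
    · rw [hA, hB, ht_def,
        show (Real.sqrt 2)⁻¹ = Real.sqrt 2 / 2 from by
          field_simp; rw [Real.sq_sqrt (by norm_num)]]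
      ring
end
end

section
/- Let n, m ∈ ℝ³ be unit vectors. The set of admissible points {((1/2)‖a−n‖, (1/2)‖b−m‖) : a,b ∈ ℝ³, ‖a‖ ≤ 1, ‖b‖ ≤ 1, ‖a+b‖ + ‖a−b‖ ≤ 2} ∩ ([0,1/2] × [0,1/2]) is a closed convex subset of ℝ², and with every point (D₁, D₂) it contains every (D₁', D₂') with D₁ ≤ D₁' ≤ 1/2 and D₂ ≤ D₂' ≤ 1/2. -/
noncomputable section

open Matrix
open scoped RealInnerProductSpace ComplexOrder

lemma scaleA (a b : V3) (r : ℝ) (hr0 : 0 ≤ r) (hr1 : r ≤ 1) :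
    ‖r • a + b‖ + ‖r • a - b‖ ≤ ‖a + b‖ + ‖a - b‖ := by
  have h1 : r • a + b = ((1 + r) / 2) • (a + b) + ((1 - r) / 2) • (b - a) := by
    module
  have h2 : r • a - b = ((1 + r) / 2) • (a - b) - ((1 - r) / 2) • (a + b) := by
    module
  have e1 : ‖r • a + b‖ ≤ (1 + r) / 2 * ‖a + b‖ + (1 - r) / 2 * ‖b - a‖ := by
    rw [h1]
    refine (norm_add_le _ _).trans ?_
    rw [norm_smul, norm_smul, Real.norm_eq_abs, Real.norm_eq_abs,
      abs_of_nonneg (by linarith), abs_of_nonneg (by linarith)]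
  have e2 : ‖r • a - b‖ ≤ (1 + r) / 2 * ‖a - b‖ + (1 - r) / 2 * ‖a + b‖ := by
    rw [h2]
    refine (norm_sub_le _ _).trans ?_
    rw [norm_smul, norm_smul, Real.norm_eq_abs, Real.norm_eq_abs,
      abs_of_nonneg (by linarith), abs_of_nonneg (by linarith)]
  rw [norm_sub_rev b a] at e1
  nlinarith [norm_nonneg (a + b), norm_nonneg (a - b)]

lemma scaleB (a b : V3) (s : ℝ) (hs0 : 0 ≤ s) (hs1 : s ≤ 1) :
    ‖a + s • b‖ + ‖a - s • b‖ ≤ ‖a + b‖ + ‖a - b‖ := by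
  have := scaleA b a s hs0 hs1
  rw [norm_sub_rev (s • b) a, norm_sub_rev b a, add_comm (s • b) a, add_comm b a] at this
  linarith

lemma ivt3 (nn a : V3) (hnn : ‖nn‖ = 1) (c : ℝ) (h1 : ‖a - nn‖ ≤ c) (h2 : c ≤ 1) :
    ∃ r ∈ Set.Icc (0:ℝ) 1, ‖r • a - nn‖ = c := by
  have hcont : ContinuousOn (fun r : ℝ => ‖r • a - nn‖) (Set.Icc 0 1) := by fun_prop
  have key := intermediate_value_Icc' (by norm_num : (0:ℝ) ≤ 1) hcont
  have hc : c ∈ Set.Icc ‖(1:ℝ) • a - nn‖ ‖(0:ℝ) • a - nn‖ := by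
    simp only [one_smul, zero_smul, zero_sub, norm_neg, hnn]
    exact ⟨h1, h2⟩
  obtain ⟨r, hr, hrc⟩ := key hc
  exact ⟨r, hr, hrc⟩

lemma mem_lemma (n m : V3) (hn : ‖n‖ = 1) (hm : ‖m‖ = 1) (a b : V3)
    (ha : ‖a‖ ≤ 1) (hb : ‖b‖ ≤ 1) (hjm : ‖a + b‖ + ‖a - b‖ ≤ 2) (q : ℝ × ℝ)
    (h1 : 2⁻¹ * ‖a - n‖ ≤ q.1) (h2 : q.1 ≤ 1 / 2)
    (h3 : 2⁻¹ * ‖b - m‖ ≤ q.2) (h4 : q.2 ≤ 1 / 2) :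
    ∃ a' b' : V3, ‖a'‖ ≤ 1 ∧ ‖b'‖ ≤ 1 ∧ ‖a' + b'‖ + ‖a' - b'‖ ≤ 2 ∧
      q = (2⁻¹ * ‖a' - n‖, 2⁻¹ * ‖b' - m‖) := by
  obtain ⟨r, ⟨hr0, hr1⟩, hra⟩ := ivt3 n a hn (2 * q.1) (by linarith) (by linarith)
  obtain ⟨s, ⟨hs0, hs1⟩, hsb⟩ := ivt3 m b hm (2 * q.2) (by linarith) (by linarith)
  refine ⟨r • a, s • b, ?_, ?_, ?_, ?_⟩
  · rw [norm_smul, Real.norm_eq_abs, abs_of_nonneg hr0]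
    nlinarith [norm_nonneg a]
  · rw [norm_smul, Real.norm_eq_abs, abs_of_nonneg hs0]
    nlinarith [norm_nonneg b]
  · calc ‖r • a + s • b‖ + ‖r • a - s • b‖ ≤ ‖r • a + b‖ + ‖r • a - b‖ :=
          scaleB (r • a) b s hs0 hs1
      _ ≤ ‖a + b‖ + ‖a - b‖ := scaleA a b r hr0 hr1
      _ ≤ 2 := hjm
  · rw [hra, hsb]
    ext <;> simp [mul_comm]

theorem stmt19 (n m : V3) (hn : ‖n‖ = 1) (hm : ‖m‖ = 1) (S : Set (ℝ × ℝ))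
    (hS : S = {p : ℝ × ℝ | ∃ a b : V3, ‖a‖ ≤ 1 ∧ ‖b‖ ≤ 1 ∧ ‖a + b‖ + ‖a - b‖ ≤ 2 ∧
        p = (2⁻¹ * ‖a - n‖, 2⁻¹ * ‖b - m‖)} ∩
      (Set.Icc 0 (1 / 2) ×ˢ Set.Icc 0 (1 / 2))) :
    IsClosed S ∧ Convex ℝ S ∧
    ∀ p ∈ S, ∀ q : ℝ × ℝ, p.1 ≤ q.1 → q.1 ≤ 1 / 2 → p.2 ≤ q.2 → q.2 ≤ 1 / 2 → q ∈ S := by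
  -- monotone part first, as it is used for convexity
  have hmono : ∀ p ∈ S, ∀ q : ℝ × ℝ, p.1 ≤ q.1 → q.1 ≤ 1 / 2 → p.2 ≤ q.2 → q.2 ≤ 1 / 2 →
      q ∈ S := by
    intro p hp q hq1 hq2 hq3 hq4
    rw [hS] at hp ⊢
    obtain ⟨⟨a, b, ha, hb, hjm, hpe⟩, ⟨hp1, _⟩, ⟨hp2, _⟩⟩ := hp
    have hpe1 : p.1 = 2⁻¹ * ‖a - n‖ := by rw [hpe]
    have hpe2 : p.2 = 2⁻¹ * ‖b - m‖ := by rw [hpe]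
    refine ⟨mem_lemma n m hn hm a b ha hb hjm q (by linarith) hq2 (by linarith) hq4,
      ⟨by linarith, hq2⟩, ⟨by linarith, hq4⟩⟩
  refine ⟨?_, ?_, hmono⟩
  · -- closedness
    have himg : {p : ℝ × ℝ | ∃ a b : V3, ‖a‖ ≤ 1 ∧ ‖b‖ ≤ 1 ∧ ‖a + b‖ + ‖a - b‖ ≤ 2 ∧
        p = (2⁻¹ * ‖a - n‖, 2⁻¹ * ‖b - m‖)} =
        (fun x : V3 × V3 => (2⁻¹ * ‖x.1 - n‖, 2⁻¹ * ‖x.2 - m‖)) ''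
          {x : V3 × V3 | ‖x.1‖ ≤ 1 ∧ ‖x.2‖ ≤ 1 ∧ ‖x.1 + x.2‖ + ‖x.1 - x.2‖ ≤ 2} := by
      ext p
      constructor
      · rintro ⟨a, b, ha, hb, hjm, rfl⟩
        exact ⟨(a, b), ⟨ha, hb, hjm⟩, rfl⟩
      · rintro ⟨⟨a, b⟩, ⟨ha, hb, hjm⟩, rfl⟩
        exact ⟨a, b, ha, hb, hjm, rfl⟩
    have hK : IsCompact {x : V3 × V3 | ‖x.1‖ ≤ 1 ∧ ‖x.2‖ ≤ 1 ∧
        ‖x.1 + x.2‖ + ‖x.1 - x.2‖ ≤ 2} := by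
      apply Metric.isCompact_of_isClosed_isBounded
      · have c1 : IsClosed {x : V3 × V3 | ‖x.1‖ ≤ 1} :=
          isClosed_le (continuous_fst.norm) continuous_const
        have c2 : IsClosed {x : V3 × V3 | ‖x.2‖ ≤ 1} :=
          isClosed_le (continuous_snd.norm) continuous_const
        have c3 : IsClosed {x : V3 × V3 | ‖x.1 + x.2‖ + ‖x.1 - x.2‖ ≤ 2} :=
          isClosed_le (((continuous_fst.add continuous_snd).norm).add
            ((continuous_fst.sub continuous_snd).norm)) continuous_const
        exact c1.inter (c2.inter c3)
      · refine (Metric.isBounded_closedBall (x := (0 : V3 × V3)) (r := 1)).subset ?_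
        rintro ⟨a, b⟩ ⟨ha, hb, _⟩
        simp only [Metric.mem_closedBall, dist_zero_right, Prod.norm_def]
        exact max_le ha hb
    have hcont : Continuous (fun x : V3 × V3 => (2⁻¹ * ‖x.1 - n‖, 2⁻¹ * ‖x.2 - m‖)) := by
      fun_prop
    rw [hS, himg]
    exact ((hK.image hcont).isClosed).inter (isClosed_Icc.prod isClosed_Icc)
  · -- convexity
    intro p hp p' hp' t s ht hs hts
    have hp0 := hp
    have hp'0 := hp'
    rw [hS] at hp0 hp'0
    obtain ⟨⟨a, b, ha, hb, hjm, hpe⟩, ⟨hp1, hp1'⟩, ⟨hp2, hp2'⟩⟩ := hp0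
    obtain ⟨⟨a', b', ha', hb', hjm', hpe'⟩, ⟨hq1, hq1'⟩, ⟨hq2, hq2'⟩⟩ := hp'0
    set a'' := t • a + s • a' with ha''def
    set b'' := t • b + s • b' with hb''def
    have ha'' : ‖a''‖ ≤ 1 := by
      calc ‖a''‖ ≤ ‖t • a‖ + ‖s • a'‖ := norm_add_le _ _
        _ = t * ‖a‖ + s * ‖a'‖ := by
          rw [norm_smul, norm_smul, Real.norm_eq_abs, Real.norm_eq_abs,
            abs_of_nonneg ht, abs_of_nonneg hs]
        _ ≤ t * 1 + s * 1 := by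
          gcongr
        _ = 1 := by linarith
    have hb'' : ‖b''‖ ≤ 1 := by
      calc ‖b''‖ ≤ ‖t • b‖ + ‖s • b'‖ := norm_add_le _ _
        _ = t * ‖b‖ + s * ‖b'‖ := by
          rw [norm_smul, norm_smul, Real.norm_eq_abs, Real.norm_eq_abs,
            abs_of_nonneg ht, abs_of_nonneg hs]
        _ ≤ t * 1 + s * 1 := by gcongr
        _ = 1 := by linarith
    have hjm'' : ‖a'' + b''‖ + ‖a'' - b''‖ ≤ 2 := by
      have e1 : a'' + b'' = t • (a + b) + s • (a' + b') := by rw [ha''def, hb''def]; module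
      have e2 : a'' - b'' = t • (a - b) + s • (a' - b') := by rw [ha''def, hb''def]; module
      have n1 : ‖a'' + b''‖ ≤ t * ‖a + b‖ + s * ‖a' + b'‖ := by
        rw [e1]
        refine (norm_add_le _ _).trans ?_
        rw [norm_smul, norm_smul, Real.norm_eq_abs, Real.norm_eq_abs,
          abs_of_nonneg ht, abs_of_nonneg hs]
      have n2 : ‖a'' - b''‖ ≤ t * ‖a - b‖ + s * ‖a' - b'‖ := by
        rw [e2]
        refine (norm_add_le _ _).trans ?_
        rw [norm_smul, norm_smul, Real.norm_eq_abs, Real.norm_eq_abs,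
          abs_of_nonneg ht, abs_of_nonneg hs]
      nlinarith [norm_nonneg (a + b), norm_nonneg (a - b), norm_nonneg (a' + b'),
        norm_nonneg (a' - b')]
    have hd1 : 2⁻¹ * ‖a'' - n‖ ≤ t * p.1 + s * p'.1 := by
      have e0 : t • (a - n) + s • (a' - n) = (t • a + s • a') - (t + s) • n := by module
      rw [hts, one_smul] at e0
      have e : a'' - n = t • (a - n) + s • (a' - n) := by rw [ha''def, e0]
      have : ‖a'' - n‖ ≤ t * ‖a - n‖ + s * ‖a' - n‖ := by
        rw [e]
        refine (norm_add_le _ _).trans ?_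
        rw [norm_smul, norm_smul, Real.norm_eq_abs, Real.norm_eq_abs,
          abs_of_nonneg ht, abs_of_nonneg hs]
      have hpp : p.1 = 2⁻¹ * ‖a - n‖ := by rw [hpe]
      have hpp' : p'.1 = 2⁻¹ * ‖a' - n‖ := by rw [hpe']
      rw [hpp, hpp']
      linarith
    have hd2 : 2⁻¹ * ‖b'' - m‖ ≤ t * p.2 + s * p'.2 := by
      have e0 : t • (b - m) + s • (b' - m) = (t • b + s • b') - (t + s) • m := by module
      rw [hts, one_smul] at e0
      have e : b'' - m = t • (b - m) + s • (b' - m) := by rw [hb''def, e0]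
      have : ‖b'' - m‖ ≤ t * ‖b - m‖ + s * ‖b' - m‖ := by
        rw [e]
        refine (norm_add_le _ _).trans ?_
        rw [norm_smul, norm_smul, Real.norm_eq_abs, Real.norm_eq_abs,
          abs_of_nonneg ht, abs_of_nonneg hs]
      have hpp : p.2 = 2⁻¹ * ‖b - m‖ := by rw [hpe]
      have hpp' : p'.2 = 2⁻¹ * ‖b' - m‖ := by rw [hpe']
      rw [hpp, hpp']
      linarith
    -- the intermediate point (½‖a''-n‖, ½‖b''-m‖) is in S
    have hcoord1 : (t • p + s • p').1 = t * p.1 + s * p'.1 := rfl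
    have hcoord2 : (t • p + s • p').2 = t * p.2 + s * p'.2 := rfl
    have hle1 : t * p.1 + s * p'.1 ≤ 1 / 2 := by
      have u1 := mul_le_mul_of_nonneg_left hp1' ht
      have u2 := mul_le_mul_of_nonneg_left hq1' hs
      linarith
    have hle2 : t * p.2 + s * p'.2 ≤ 1 / 2 := by
      have u1 := mul_le_mul_of_nonneg_left hp2' ht
      have u2 := mul_le_mul_of_nonneg_left hq2' hs
      linarith
    have hmid : ((2⁻¹ * ‖a'' - n‖ : ℝ), (2⁻¹ * ‖b'' - m‖ : ℝ)) ∈ S := by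
      rw [hS]
      have m1 : (2⁻¹ * ‖a'' - n‖ : ℝ) ≤ 1 / 2 := le_trans hd1 hle1
      have m2 : (2⁻¹ * ‖b'' - m‖ : ℝ) ≤ 1 / 2 := le_trans hd2 hle2
      exact ⟨⟨a'', b'', ha'', hb'', hjm'', rfl⟩, ⟨by positivity, m1⟩, ⟨by positivity, m2⟩⟩
    exact hmono _ hmid _ (by simpa [hcoord1] using hd1) (by rw [hcoord1]; exact hle1)
      (by simpa [hcoord2] using hd2) (by rw [hcoord2]; exact hle2)
end
end
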